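/- arXiv:1502.03766 — 5 statements merged into one kernel-verified Lean document; each statement's English description precedes it below -/
import Mathlib

section
/- Let C be a commutative ring, R a (possibly non-unital) C-algebra, G a semigroup with zero, and δ : G → R a central map that preserves zero. Then the map CG → R given by f ↦ ∑_{g∈G} f(g)δ(g) vanishes on the ideal I₀, hence induces a well-defined map t_δ : \overline{CG} → R, and t_δ is a C-linear trace. -/
/-- The one-step relation: `x = a*b` and `y = b*a`. -/
def simStep {G : Type*} [Mul G] (x y : G) : Prop := ∃ a b : G, x = a * b ∧ y = b * a

/-- The relation `~` on a semigroup: the reflexive-transitive closure of `simStep`. -/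
def sim {G : Type*} [Mul G] : G → G → Prop := Relation.ReflTransGen simStep

theorem sim_equiv {G : Type*} [Mul G] : Equivalence (sim (G := G)) :=
  ⟨fun _ => Relation.ReflTransGen.refl,
   fun h => by
      have : Std.Symm (simStep (G := G)) := ⟨fun _ _ ⟨a, b, h1, h2⟩ => ⟨b, a, h2, h1⟩⟩
      exact Std.Symm.symm (r := Relation.ReflTransGen simStep) _ _ h,
   fun h1 h2 => Relation.ReflTransGen.trans h1 h2⟩

/-- The setoid on `G` given by `~`. -/
def simSetoid (G : Type*) [Mul G] : Setoid G := ⟨sim, sim_equiv⟩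

/-- The additive subgroup `[A,A]` generated by commutators. -/
def commutatorSubgroup (A : Type*) [NonUnitalNonAssocRing A] : AddSubgroup A :=
  AddSubgroup.closure {x | ∃ a b : A, x = a * b - b * a}

/-- The ideal `I₀` of the semigroup ring `CG` consisting of functions supported in `{0}`. -/
noncomputable def I0 (C G : Type*) [CommRing C] [SemigroupWithZero G] :
    TwoSidedIdeal (MonoidAlgebra C G) :=
  TwoSidedIdeal.mk' {f : MonoidAlgebra C G | ∀ g : G, g ≠ 0 → f.coeff g = 0}
    (fun _ _ => rfl)
    (fun {x y} hx hy g hg => by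
      show (x + y).coeff g = 0
      rw [MonoidAlgebra.coeff_add, Finsupp.add_apply, hx g hg, hy g hg, add_zero])
    (fun {x} hx g hg => by
      show (-x).coeff g = 0
      rw [MonoidAlgebra.coeff_neg, Finsupp.neg_apply, hx g hg, neg_zero])
    (fun {x y} hy g hg => by
      classical
      rw [MonoidAlgebra.coeff_mul]
      rw [Finsupp.sum]
      refine Finset.sum_eq_zero fun a _ => ?_
      rw [Finsupp.sum]
      refine Finset.sum_eq_zero fun b hb => ?_
      have hb0 : b = 0 := by
        by_contra h
        exact Finsupp.mem_support_iff.mp hb (hy b h)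
      subst hb0
      rw [mul_zero, if_neg fun h => hg h.symm])
    (fun {x y} hx g hg => by
      classical
      rw [MonoidAlgebra.coeff_mul]
      rw [Finsupp.sum]
      refine Finset.sum_eq_zero fun a ha => ?_
      rw [Finsupp.sum]
      refine Finset.sum_eq_zero fun b _ => ?_
      have ha0 : a = 0 := by
        by_contra h
        exact Finsupp.mem_support_iff.mp ha (hx a h)
      subst ha0
      rw [zero_mul, if_neg fun h => hg h.symm])

/-- The contracted semigroup ring `\overline{CG} = CG / I₀`. -/
abbrev ContractedSemigroupRing (C G : Type*) [CommRing C] [SemigroupWithZero G] :=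
  (I0 C G).ringCon.Quotient

/-- The quotient map `π : CG → \overline{CG}`. -/
noncomputable def toCSR (C G : Type*) [CommRing C] [SemigroupWithZero G]
    (f : MonoidAlgebra C G) : ContractedSemigroupRing C G := f

/-- The map `f ↦ ∑_g f(g) • δ(g)` from `CG` to `R`. -/
def elemSum (C : Type*) {G R : Type*} [CommRing C] [SemigroupWithZero G]
    [AddCommMonoid R] [Module C R] (δ : G → R) (f : MonoidAlgebra C G) : R :=
  f.coeff.sum fun g c => c • δ g

lemma mem_I0 {C G : Type*} [CommRing C] [SemigroupWithZero G] (f : MonoidAlgebra C G) :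
    f ∈ I0 C G ↔ ∀ g, g ≠ 0 → f.coeff g = 0 :=
  TwoSidedIdeal.mem_mk' ..

section ElemSum

variable {C G R : Type*} [CommRing C] [SemigroupWithZero G] [AddCommMonoid R] [Module C R]
  (δ : G → R)

lemma elemSum_eq_linearCombination (f : MonoidAlgebra C G) :
    elemSum C δ f = Finsupp.linearCombination C δ f.coeff :=
  rfl

@[simp]
lemma elemSum_zero : elemSum C δ 0 = 0 := by
  simp [elemSum_eq_linearCombination]

@[simp]
lemma elemSum_add (f g : MonoidAlgebra C G) :
    elemSum C δ (f + g) = elemSum C δ f + elemSum C δ g := by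
  simp [elemSum_eq_linearCombination]

@[simp]
lemma elemSum_smul (c : C) (f : MonoidAlgebra C G) :
    elemSum C δ (c • f) = c • elemSum C δ f := by
  simp [elemSum_eq_linearCombination]

@[simp]
lemma elemSum_single (g : G) (c : C) :
    elemSum C δ (MonoidAlgebra.single g c) = c • δ g := by
  simp [elemSum_eq_linearCombination]

lemma elemSum_mul_comm (hδ : ∀ g h : G, δ (g * h) = δ (h * g)) (f f' : MonoidAlgebra C G) :
    elemSum C δ (f * f') = elemSum C δ (f' * f) := by
  induction f using MonoidAlgebra.induction_linear with
  | zero => simp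
  | add f₁ f₂ h₁ h₂ => simp [add_mul, mul_add, h₁, h₂]
  | single a c =>
    induction f' using MonoidAlgebra.induction_linear with
    | zero => simp
    | add f₁ f₂ h₁ h₂ => simp [add_mul, mul_add, h₁, h₂]
    | single b d => simp [MonoidAlgebra.single_mul_single, hδ a b, mul_comm c d]

-- An element of `I₀` is a multiple of the basis element `0`, which `δ` sends to `0`.
lemma elemSum_eq_zero_of_mem_I0 (hδ : δ 0 = 0) {f : MonoidAlgebra C G} (hf : f ∈ I0 C G) :
    elemSum C δ f = 0 := by
  have hf' : ∀ g, g ≠ 0 → f.coeff g = 0 := (mem_I0 f).1 hf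
  rw [elemSum, Finsupp.sum_eq_single 0 (fun g hg hg0 => (hg (hf' g hg0)).elim)
    (fun _ => zero_smul C _), hδ, smul_zero]

end ElemSum

lemma elemSum_sub {C G R : Type*} [CommRing C] [SemigroupWithZero G] [AddCommGroup R]
    [Module C R] (δ : G → R) (f g : MonoidAlgebra C G) :
    elemSum C δ (f - g) = elemSum C δ f - elemSum C δ g := by
  simp [elemSum_eq_linearCombination]

theorem semigroupRing_induced_trace_general
    {C G R : Type*} [CommRing C] [SemigroupWithZero G]
    [NonUnitalRing R] [Module C R]
    (δ : G → R) (hcentral : ∀ g h : G, δ (g * h) = δ (h * g)) (hzero : δ 0 = 0) :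
    (∀ f ∈ I0 C G, elemSum C δ f = 0) ∧
    ∃ t : ContractedSemigroupRing C G → R,
      (∀ f : MonoidAlgebra C G, t (toCSR C G f) = elemSum C δ f) ∧
      (∀ x y : ContractedSemigroupRing C G, t (x + y) = t x + t y) ∧
      (∀ x y : ContractedSemigroupRing C G, t (x * y) = t (y * x)) ∧
      (∀ (c : C) (f : MonoidAlgebra C G),
        t (toCSR C G (c • f)) = c • t (toCSR C G f)) := by
  have vanish : ∀ f ∈ I0 C G, elemSum C δ f = 0 := fun _ => elemSum_eq_zero_of_mem_I0 δ hzero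
  have wellDefined (f g : MonoidAlgebra C G) (hfg : (I0 C G).ringCon f g) :
      elemSum C δ f = elemSum C δ g := by
    rw [← sub_eq_zero, ← elemSum_sub]
    exact vanish _ ((TwoSidedIdeal.rel_iff _ _ _).1 hfg)
  refine ⟨vanish, Quotient.lift (elemSum C δ) wellDefined, fun _ => rfl, ?_, ?_,
    fun c f => elemSum_smul δ c f⟩
  · rintro ⟨f⟩ ⟨g⟩
    exact elemSum_add δ f g
  · rintro ⟨f⟩ ⟨g⟩
    exact elemSum_mul_comm δ hcentral f g

/-- For a central zero-preserving map `δ : G → R`, the map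
`f ↦ ∑_g f(g) • δ(g)` vanishes on `I₀`, hence induces a well-defined map
`t_δ : \overline{CG} → R`, which is a `C`-linear trace. -/
theorem semigroupRing_induced_trace
    {C G R : Type*} [CommRing C] [SemigroupWithZero G]
    [NonUnitalRing R] [Module C R] [SMulCommClass C R R] [IsScalarTower C R R]
    (δ : G → R) (hcentral : ∀ g h : G, δ (g * h) = δ (h * g)) (hzero : δ 0 = 0) :
    (∀ f ∈ I0 C G, elemSum C δ f = 0) ∧
    ∃ t : ContractedSemigroupRing C G → R,
      (∀ f : MonoidAlgebra C G, t (toCSR C G f) = elemSum C δ f) ∧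
      (∀ x y : ContractedSemigroupRing C G, t (x + y) = t x + t y) ∧
      (∀ x y : ContractedSemigroupRing C G, t (x * y) = t (y * x)) ∧
      (∀ (c : C) (f : MonoidAlgebra C G),
        t (toCSR C G (c • f)) = c • t (toCSR C G f)) :=
  semigroupRing_induced_trace_general δ hcentral hzero
end

section
/- Let C be a commutative unital ring, n ≥ 1 a natural number, and c ∈ C. The C-linear trace t : Mₙ(C) → C given by t(M) = c · tr(M) is minimal (i.e., t(M) = 0 implies M ∈ [Mₙ(C), Mₙ(C)], the additive subgroup generated by commutators AB − BA) if and only if c is not a zero divisor in C (i.e., for all a ∈ C, a·c = 0 implies a = 0). -/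
lemma mul_sub_mul_mem_commutatorSubgroup {A : Type*} [NonUnitalNonAssocRing A] (a b : A) :
    a * b - b * a ∈ commutatorSubgroup A :=
  AddSubgroup.subset_closure ⟨a, b, rfl⟩

namespace Matrix

variable {ι R : Type*} [Fintype ι]

lemma commutatorSubgroup_le_ker_trace [CommRing R] :
    commutatorSubgroup (Matrix ι ι R) ≤ (traceAddMonoidHom ι R).ker := by
  refine AddSubgroup.closure_le _ |>.2 ?_
  rintro _ ⟨a, b, rfl⟩
  simp [trace_mul_comm a b]

variable [DecidableEq ι]

section Ring

variable [Ring R]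

lemma single_mem_commutatorSubgroup {i j : ι} (hij : i ≠ j) (r : R) :
    single i j r ∈ commutatorSubgroup (Matrix ι ι R) := by
  have h : single i j r = single i j r * single j j 1 - single j j 1 * single i j r := by
    rw [single_mul_single_same, single_mul_single_of_ne (h := hij.symm), mul_one, sub_zero]
  rw [h]
  exact mul_sub_mul_mem_commutatorSubgroup _ _

lemma single_sub_single_mem_commutatorSubgroup (i j : ι) (r : R) :
    single i i r - single j j r ∈ commutatorSubgroup (Matrix ι ι R) := by
  have h : single i i r - single j j r =
      single i j r * single j i 1 - single j i 1 * single i j r := by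
    rw [single_mul_single_same, single_mul_single_same, mul_one, one_mul]
  rw [h]
  exact mul_sub_mul_mem_commutatorSubgroup _ _

lemma sub_single_trace_mem_commutatorSubgroup (i₀ : ι) (M : Matrix ι ι R) :
    M - single i₀ i₀ M.trace ∈ commutatorSubgroup (Matrix ι ι R) := by
  induction M using Matrix.induction_on' with
  | h_zero => simp
  | h_add p q hp hq =>
    have h : p + q - single i₀ i₀ (p + q).trace =
        (p - single i₀ i₀ p.trace) + (q - single i₀ i₀ q.trace) := by
      rw [trace_add, single_add]
      abel
    rw [h]
    exact add_mem hp hq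
  | h_std_basis i j r =>
    rcases eq_or_ne i j with rfl | hij
    · rw [trace_single_eq_same]
      exact single_sub_single_mem_commutatorSubgroup i i₀ r
    · rw [trace_single_eq_of_ne i j r hij, single_zero, sub_zero]
      exact single_mem_commutatorSubgroup hij r

end Ring

lemma mem_commutatorSubgroup_iff_trace_eq_zero [CommRing R] [Nonempty ι] {M : Matrix ι ι R} :
    M ∈ commutatorSubgroup (Matrix ι ι R) ↔ M.trace = 0 := by
  refine ⟨fun h ↦ commutatorSubgroup_le_ker_trace h, fun h ↦ ?_⟩
  simpa [h] using sub_single_trace_mem_commutatorSubgroup (Classical.arbitrary ι) M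

end Matrix

/-- For `n ≥ 1` and `c ∈ C`, the `C`-linear trace `M ↦ c · tr(M)` on
`Mₙ(C)` is minimal if and only if `c` is not a zero divisor. -/
theorem matrix_smul_trace_minimal_iff
    {C : Type*} [CommRing C] (n : ℕ) (hn : 1 ≤ n) (c : C) :
    (∀ M : Matrix (Fin n) (Fin n) C, c * Matrix.trace M = 0 →
        M ∈ commutatorSubgroup (Matrix (Fin n) (Fin n) C)) ↔
      ∀ a : C, a * c = 0 → a = 0 := by
  let i₀ : Fin n := ⟨0, hn⟩
  have : Nonempty (Fin n) := ⟨i₀⟩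
  simp only [Matrix.mem_commutatorSubgroup_iff_trace_eq_zero]
  refine ⟨fun h a ha ↦ ?_, fun h M hM ↦ h _ (by rwa [mul_comm])⟩
  simpa using h (Matrix.single i₀ i₀ a) (by rw [Matrix.trace_single_eq_same, mul_comm, ha])
end

section
/- Let C be a commutative ring and R a C-algebra with a positive definite involution *. Let (T_i)_{i∈I} be a family of commutative *-closed C-subalgebras of R (each T_i is a C-submodule of R closed under multiplication and under *, and xy = yx for all x, y ∈ T_i). Equip the direct sum ⨁_{i∈I} T_i with the componentwise involution. Then the map t : ⨁_{i∈I} T_i → R defined by t((x_i)_{i∈I}) = ∑_{i∈I} x_i is a faithful C-linear trace. -/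
/-!
A positive element of `⨁ᵢ Tᵢ` is a finite sum `x = ∑ₖ zₖ zₖ*`, so its image in `R` is
`∑ᵢ ∑ₖ zₖᵢ zₖᵢ*`, again positive. If that image vanishes, positive definiteness of `*` on `R`
forces every `zₖᵢ = 0`, hence `x = 0`. Commutativity of each `Tᵢ` makes the componentwise product
commutative, which gives the trace property, and the map is `C`-linear as a sum of inclusions of
`C`-submodules.
-/

/-- An element of a `*`-ring is positive if it is a finite sum of elements of the form
`y * star y`. -/
def IsPositiveElem {A : Type*} [NonUnitalRing A] [StarRing A] (x : A) : Prop :=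
  x ∈ AddSubmonoid.closure {y : A | ∃ z : A, y = z * star z}

theorem exists_eq_sum_mul_star_of_mem_closure {A : Type*} [AddCommMonoid A] [Mul A] [Star A]
    {x : A} (hx : x ∈ AddSubmonoid.closure {y | ∃ z : A, y = z * star z}) :
    ∃ (n : ℕ) (z : Fin n → A), x = ∑ k, z k * star (z k) := by
  induction hx using AddSubmonoid.closure_induction with
  | mem y hy =>
    obtain ⟨z, rfl⟩ := hy
    exact ⟨1, fun _ => z, by simp⟩
  | zero => exact ⟨0, Fin.elim0, by simp⟩
  | add a b _ _ iha ihb =>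
    obtain ⟨n, z, rfl⟩ := iha
    obtain ⟨m, w, rfl⟩ := ihb
    exact ⟨n + m, Fin.append z w, by simp [Fin.sum_univ_add]⟩

theorem eq_zero_of_sum_mul_star_eq_zero {A : Type*} [AddCommMonoid A] [Mul A] [Star A]
    (hpd : ∀ (n : ℕ) (v : Fin n → A), ∑ i, v i * star (v i) = 0 → ∀ i, v i = 0)
    {ι : Type*} {s : Finset ι} {v : ι → A} (h : ∑ i ∈ s, v i * star (v i) = 0) :
    ∀ i ∈ s, v i = 0 := by
  let e := s.equivFin
  have hv := hpd s.card (fun k => v (e.symm k)) <| by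
    rw [e.symm.sum_comp (fun i : s => v i * star (v i))]
    exact (Finset.sum_coe_sort s fun i => v i * star (v i)).trans h
  intro i hi
  simpa using hv (e ⟨i, hi⟩)

theorem isPositiveElem_sum_mul_star {A : Type*} [NonUnitalRing A] [StarRing A] {ι : Type*}
    (s : Finset ι) (v : ι → A) : IsPositiveElem (∑ i ∈ s, v i * star (v i)) :=
  AddSubmonoid.sum_mem _ fun i _ => AddSubmonoid.subset_closure ⟨v i, rfl⟩

section DirectSum

variable {C R : Type*} [CommRing C] [NonUnitalRing R] [StarRing R] [Module C R]
  [SMulCommClass C R R] [IsScalarTower C R R]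
variable {I : Type*} (T : I → NonUnitalStarSubalgebra C R)

/-- Componentwise multiplication on the direct sum `⨁_{i∈I} T_i`. -/
instance directSumMul : Mul (Π₀ i, T i) :=
  ⟨DFinsupp.zipWith (fun _ x y => x * y) (fun _ => mul_zero 0)⟩

/-- Componentwise involution on the direct sum `⨁_{i∈I} T_i`. -/
instance directSumStar : Star (Π₀ i, T i) :=
  ⟨DFinsupp.mapRange (fun _ x => star x) (fun _ => star_zero _)⟩

open Classical in
/-- The map `⨁_{i∈I} T_i → R` given by `(x_i)_{i∈I} ↦ ∑_{i∈I} x_i`. -/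
noncomputable def directSumToRing : (Π₀ i, T i) → R :=
  fun x => DFinsupp.sumAddHom (fun i => AddSubmonoidClass.subtype (T i)) x

section
omit [SMulCommClass C R R] [IsScalarTower C R R]

theorem directSum_mul_apply (x y : Π₀ i, T i) (i : I) : (x * y) i = x i * y i :=
  DFinsupp.zipWith_apply _ _ x y i

theorem directSum_star_apply (x : Π₀ i, T i) (i : I) : (star x) i = star (x i) :=
  DFinsupp.mapRange_apply _ _ x i

theorem directSum_mul_comm (hcomm : ∀ (i : I) (x y : T i), x * y = y * x) (x y : Π₀ i, T i) :
    x * y = y * x :=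
  DFinsupp.ext fun i => by rw [directSum_mul_apply, directSum_mul_apply, hcomm]

open Classical in
theorem directSumToRing_eq_lsum (x : Π₀ i, T i) :
    directSumToRing T x =
      DFinsupp.lsum ℕ (fun i => (T i).toNonUnitalSubalgebra.toSubmodule.subtype) x :=
  rfl

theorem directSumToRing_add (x y : Π₀ i, T i) :
    directSumToRing T (x + y) = directSumToRing T x + directSumToRing T y :=
  map_add _ x y

theorem directSumToRing_smul (c : C) (x : Π₀ i, T i) :
    directSumToRing T (c • x) = c • directSumToRing T x := by
  classical
  simp only [directSumToRing_eq_lsum, map_smul]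

theorem directSumToRing_eq_finset_sum (x : Π₀ i, T i) {s : Finset I} (hs : ∀ i ∉ s, x i = 0) :
    directSumToRing T x = ∑ i ∈ s, (x i : R) := by
  classical
  refine (DFinsupp.sumAddHom_apply _ x).trans <|
    DFinsupp.sum_of_support_subset (fun i hi => ?_) fun _ _ => rfl
  by_contra his
  exact DFinsupp.mem_support_iff.mp hi (hs i his)

theorem directSumToRing_sum_mul_star {κ : Type*} [Fintype κ] (z : κ → Π₀ i, T i) {s : Finset I}
    (hs : ∀ k, ∀ i ∉ s, z k i = 0) :
    directSumToRing T (∑ k, z k * star (z k)) =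
      ∑ p ∈ Finset.univ ×ˢ s, (z p.1 p.2 : R) * star (z p.1 p.2 : R) := by
  have hsum (i : I) : (∑ k, z k * star (z k)) i = ∑ k, z k i * star (z k i) := by
    simp only [DFinsupp.finsetSum_apply, directSum_mul_apply, directSum_star_apply]
  rw [directSumToRing_eq_finset_sum T _ fun i hi => by simp [hsum, hs _ i hi],
    Finset.sum_product_right]
  simp only [hsum, AddSubmonoidClass.coe_finsetSum]
  rfl

theorem directSumToRing_faithful
    (hpd : ∀ (n : ℕ) (v : Fin n → R), ∑ i, v i * star (v i) = 0 → ∀ i, v i = 0)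
    {x : Π₀ i, T i} (hx : x ∈ AddSubmonoid.closure {y | ∃ z : Π₀ i, T i, y = z * star z})
    (hx0 : x ≠ 0) : IsPositiveElem (directSumToRing T x) ∧ directSumToRing T x ≠ 0 := by
  classical
  obtain ⟨n, z, rfl⟩ := exists_eq_sum_mul_star_of_mem_closure hx
  set s := Finset.univ.sup fun k => (z k).support
  have hs (k : Fin n) (i : I) (hi : i ∉ s) : z k i = 0 :=
    DFinsupp.notMem_support_iff.mp fun h => hi (Finset.mem_sup.mpr ⟨k, Finset.mem_univ _, h⟩)
  rw [directSumToRing_sum_mul_star T z hs]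
  refine ⟨isPositiveElem_sum_mul_star _ _, fun h0 => hx0 ?_⟩
  have hcoord := eq_zero_of_sum_mul_star_eq_zero hpd h0
  have hzero (k : Fin n) : z k = 0 := DFinsupp.ext fun i =>
    if hi : i ∈ s then Subtype.ext (hcoord (k, i) (Finset.mem_product.mpr ⟨Finset.mem_univ _, hi⟩))
    else hs k i hi
  exact Finset.sum_eq_zero fun k _ => DFinsupp.ext fun i => by
    simp [directSum_mul_apply, directSum_star_apply, hzero]

end

/-- If `R` is a `C`-algebra with a positive definite involution and
`(T_i)_{i∈I}` is a family of commutative `*`-closed `C`-subalgebras of `R`, then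
`(x_i)_{i∈I} ↦ ∑_{i∈I} x_i` is a faithful `C`-linear trace `⨁_{i∈I} T_i → R`. -/
theorem directSumToRing_faithful_trace
    (hpd : ∀ (n : ℕ) (v : Fin n → R), ∑ i, v i * star (v i) = 0 → ∀ i, v i = 0)
    (hcomm : ∀ (i : I) (x y : T i), x * y = y * x) :
    (∀ x y : Π₀ i, T i, directSumToRing T (x + y) =
        directSumToRing T x + directSumToRing T y) ∧
    (∀ x y : Π₀ i, T i, directSumToRing T (x * y) = directSumToRing T (y * x)) ∧
    (∀ (c : C) (x : Π₀ i, T i), directSumToRing T (c • x) = c • directSumToRing T x) ∧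
    (∀ x : Π₀ i, T i,
      x ∈ AddSubmonoid.closure {y : Π₀ i, T i | ∃ z : Π₀ i, T i, y = z * star z} →
      x ≠ 0 → IsPositiveElem (directSumToRing T x) ∧ directSumToRing T x ≠ 0) :=
  ⟨directSumToRing_add T, fun x y => by rw [directSum_mul_comm T hcomm],
    directSumToRing_smul T, fun _ hx hx0 => directSumToRing_faithful T hpd hx hx0⟩

end DirectSum
end

section
/- Let C be a commutative ring with involution *. On the ring C[x,x⁻¹] of Laurent polynomials over C (finitely supported functions ℤ → C with convolution product), define σ : C[x,x⁻¹] → C[x,x⁻¹] by σ(p)(n) = (p(−n))* for all n ∈ ℤ (i.e., σ(∑ᵢ aᵢxⁱ) = ∑ᵢ aᵢ* x⁻ⁱ). Then: (a) σ is additive, σ(σ(p)) = p, and σ(pq) = σ(q)σ(p) for all p, q, so σ is an involution on C[x,x⁻¹]; (b) if * is positive definite on C, then σ is positive definite on C[x,x⁻¹]: for p₁,…,pₙ ∈ C[x,x⁻¹], ∑ᵢ pᵢ·σ(pᵢ) = 0 implies every pᵢ = 0. -/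
/-- The involution `σ` on the Laurent polynomial ring `C[x,x⁻¹]` (realized as the ring of
finitely supported functions `ℤ → C` with convolution product), given by
`σ(∑ aᵢxⁱ) = ∑ aᵢ* x⁻ⁱ`, i.e. `σ(p)(n) = (p(-n))*`. -/
noncomputable def laurentStar (C : Type*) [CommRing C] [StarRing C]
    (p : AddMonoidAlgebra C ℤ) : AddMonoidAlgebra C ℤ :=
  AddMonoidAlgebra.ofCoeff
    (Finsupp.equivMapDomain (Equiv.neg ℤ) (Finsupp.mapRange star (star_zero _) p.coeff))

/-!
`σ` reverses products because it does so on monomials, where this is `(c d)* = d* c*` together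
with `-(a + b) = -b + -a`. The constant coefficient of `p σ(p)` is `∑ₙ p(n) p(n)*`, so
`∑ᵢ pᵢ σ(pᵢ) = 0` yields a vanishing sum `∑ c c*` over all coefficients `c` of all the `pᵢ`, and
positive definiteness of `*` on `C` kills every coefficient.
-/

open scoped AddMonoidAlgebra

def StarPositiveDefinite (R : Type*) [AddCommMonoid R] [Mul R] [Star R] : Prop :=
  ∀ (m : ℕ) (v : Fin m → R), ∑ i, v i * star (v i) = 0 → ∀ i, v i = 0

namespace StarPositiveDefinite

variable {R : Type*} [AddCommMonoid R] [Mul R] [Star R]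

theorem eq_zero_of_fintype_sum (h : StarPositiveDefinite R) {ι : Type*} [Fintype ι]
    (v : ι → R) (hv : ∑ i, v i * star (v i) = 0) (i : ι) : v i = 0 := by
  let e := Fintype.equivFin ι
  have hv' : ∑ k, v (e.symm k) * star (v (e.symm k)) = 0 := by
    rwa [e.symm.sum_comp fun i ↦ v i * star (v i)]
  simpa using h _ (v ∘ e.symm) hv' (e i)

theorem eq_zero_of_finset_sum (h : StarPositiveDefinite R) {ι : Type*} {s : Finset ι}
    (v : ι → R) (hv : ∑ i ∈ s, v i * star (v i) = 0) {i : ι} (hi : i ∈ s) : v i = 0 :=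
  h.eq_zero_of_fintype_sum (fun j : s ↦ v j)
    (by rwa [Finset.sum_coe_sort s fun i ↦ v i * star (v i)]) ⟨i, hi⟩

end StarPositiveDefinite

section LaurentStar

variable {C : Type*} [CommRing C] [StarRing C]

@[simp]
theorem coeff_laurentStar (p : C[ℤ]) (n : ℤ) :
    (laurentStar C p).coeff n = star (p.coeff (-n)) := by
  simp [laurentStar]

@[simp]
theorem laurentStar_zero : laurentStar C 0 = 0 := by
  ext n; simp

theorem laurentStar_add (p q : C[ℤ]) :
    laurentStar C (p + q) = laurentStar C p + laurentStar C q := by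
  ext n; simp

theorem laurentStar_laurentStar (p : C[ℤ]) : laurentStar C (laurentStar C p) = p := by
  ext n; simp

theorem laurentStar_single (a : ℤ) (c : C) :
    laurentStar C (AddMonoidAlgebra.single a c) = AddMonoidAlgebra.single (-a) (star c) := by
  ext n
  rw [coeff_laurentStar, AddMonoidAlgebra.coeff_single, AddMonoidAlgebra.coeff_single,
    Finsupp.single_apply, Finsupp.single_apply, apply_ite star, star_zero]
  simp only [neg_eq_iff_eq_neg]

theorem laurentStar_mul (p q : C[ℤ]) :
    laurentStar C (p * q) = laurentStar C q * laurentStar C p := by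
  induction p using AddMonoidAlgebra.induction_linear with
  | zero => simp
  | add p₁ p₂ h₁ h₂ => rw [add_mul, laurentStar_add, laurentStar_add, h₁, h₂, mul_add]
  | single a c =>
    induction q using AddMonoidAlgebra.induction_linear with
    | zero => simp
    | add q₁ q₂ h₁ h₂ => rw [mul_add, laurentStar_add, laurentStar_add, h₁, h₂, add_mul]
    | single b d =>
      simp only [AddMonoidAlgebra.single_mul_single, laurentStar_single, star_mul, neg_add_rev]

theorem coeff_mul_laurentStar_zero (p : C[ℤ]) :
    (p * laurentStar C p).coeff 0 = ∑ a ∈ p.coeff.support, p.coeff a * star (p.coeff a) := by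
  simp [AddMonoidAlgebra.coeff_mul_apply_left, Finsupp.sum]

theorem eq_zero_of_sum_mul_laurentStar_eq_zero (h : StarPositiveDefinite C) {ι : Type*}
    [Fintype ι] (P : ι → C[ℤ]) (hP : ∑ i, P i * laurentStar C (P i) = 0) (i : ι) : P i = 0 := by
  have hcoeff : ∑ x ∈ Finset.univ.sigma fun i ↦ (P i).coeff.support,
      (P x.1).coeff x.2 * star ((P x.1).coeff x.2) = 0 := by
    simpa [Finset.sum_sigma, AddMonoidAlgebra.coeff_sum, coeff_mul_laurentStar_zero] using
      congrArg (fun p ↦ p.coeff 0) hP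
  ext n
  by_cases hn : n ∈ (P i).coeff.support
  · exact h.eq_zero_of_finset_sum (fun x : (_ : ι) × ℤ ↦ (P x.1).coeff x.2) hcoeff
      (i := ⟨i, n⟩) (Finset.mem_sigma.2 ⟨Finset.mem_univ i, hn⟩)
  · exact Finsupp.notMem_support_iff.mp hn

end LaurentStar

/-- (a) `σ` is an involution on `C[x,x⁻¹]`;
(b) if the involution on `C` is positive definite, then so is `σ` on `C[x,x⁻¹]`. -/
theorem laurentStar_involution_and_positive_definite
    (C : Type*) [CommRing C] [StarRing C] :
    (∀ (p : AddMonoidAlgebra C ℤ) (n : ℤ), (laurentStar C p).coeff n = star (p.coeff (-n))) ∧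
    (∀ p q : AddMonoidAlgebra C ℤ,
      laurentStar C (p + q) = laurentStar C p + laurentStar C q) ∧
    (∀ p : AddMonoidAlgebra C ℤ, laurentStar C (laurentStar C p) = p) ∧
    (∀ p q : AddMonoidAlgebra C ℤ,
      laurentStar C (p * q) = laurentStar C q * laurentStar C p) ∧
    ((∀ (m : ℕ) (v : Fin m → C), ∑ i, v i * star (v i) = 0 → ∀ i, v i = 0) →
      ∀ (m : ℕ) (P : Fin m → AddMonoidAlgebra C ℤ),
        ∑ i, P i * laurentStar C (P i) = 0 → ∀ i, P i = 0) :=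
  ⟨coeff_laurentStar, laurentStar_add, laurentStar_laurentStar, laurentStar_mul,
    fun h _ ↦ eq_zero_of_sum_mul_laurentStar_eq_zero h⟩
end

section
/- Let R and T be *-rings and t : R → T a faithful trace. Let x ∈ R and let u ∈ R be an idempotent satisfying xu = x = ux and x*u = x* = ux*. Then xx* = u if and only if x*x = u. -/
/-!
If `x x* x = x` and `x x* x* = x*`, then `x x*` and `x* x` are projections with `x* x ≤ x x*`,
so their difference is a projection, hence positive. Its trace is
`t (x x*) - t (x* x) = 0`, so faithfulness forces `x x* = x* x`.
-/

section

variable {R : Type*} [NonUnitalRing R] [StarRing R]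

theorem IsPositiveElem.mul_star_self (z : R) : IsPositiveElem (z * star z) :=
  AddSubmonoid.subset_closure ⟨z, rfl⟩

theorem IsStarProjection.isPositiveElem {p : R} (hp : IsStarProjection p) : IsPositiveElem p := by
  have hp_eq : p * star p = p := by rw [hp.isSelfAdjoint.star_eq, hp.isIdempotentElem.eq]
  simpa only [hp_eq] using IsPositiveElem.mul_star_self p

theorem isStarProjection_mul_star_self {x : R} (hx : x * star x * x = x) :
    IsStarProjection (x * star x) where
  isIdempotentElem := by rw [IsIdempotentElem, ← mul_assoc, hx]
  isSelfAdjoint := IsSelfAdjoint.mul_star_self x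

theorem isStarProjection_star_mul_self {x : R} (hx : x * star x * x = x) :
    IsStarProjection (star x * x) where
  isIdempotentElem := by rw [IsIdempotentElem, mul_assoc, ← mul_assoc x, hx]
  isSelfAdjoint := IsSelfAdjoint.star_mul_self x

theorem IsStarProjection.eq_of_mul_eq_right_of_map_eq {T : Type*} [AddCommGroup T] (t : R → T)
    (hadd : ∀ x y : R, t (x + y) = t x + t y)
    (hfaithful : ∀ x : R, IsPositiveElem x → x ≠ 0 → t x ≠ 0)
    {p q : R} (hp : IsStarProjection p) (hq : IsStarProjection q) (hqp : q * p = p)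
    (ht : t p = t q) : p = q := by
  have hdiff_pos : IsPositiveElem (q - p) := (hp.sub_of_mul_eq_right hq hqp).isPositiveElem
  have hdiff_trace : t (q - p) = 0 := by
    have := hadd (q - p) p
    rw [sub_add_cancel, ← ht] at this
    exact add_eq_right.mp this.symm
  by_contra hne
  exact hfaithful _ hdiff_pos (sub_ne_zero.mpr (Ne.symm hne)) hdiff_trace

theorem star_mul_self_eq_mul_star_self_of_faithful_trace {T : Type*} [AddCommGroup T]
    (t : R → T) (hadd : ∀ x y : R, t (x + y) = t x + t y)
    (htrace : ∀ x y : R, t (x * y) = t (y * x))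
    (hfaithful : ∀ x : R, IsPositiveElem x → x ≠ 0 → t x ≠ 0)
    {x : R} (hx : x * star x * x = x) (hx' : x * star x * star x = star x) :
    star x * x = x * star x := by
  refine (isStarProjection_star_mul_self hx).eq_of_mul_eq_right_of_map_eq t hadd hfaithful
    (isStarProjection_mul_star_self hx) ?_ (htrace _ _)
  rw [← mul_assoc, hx']

end

theorem faithful_trace_partial_isometry_general
    {R T : Type*} [NonUnitalRing R] [StarRing R] [NonUnitalRing T] [StarRing T]
    (t : R → T)
    (hadd : ∀ x y : R, t (x + y) = t x + t y)
    (htrace : ∀ x y : R, t (x * y) = t (y * x))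
    (hfaithful : ∀ x : R, IsPositiveElem x → x ≠ 0 → IsPositiveElem (t x) ∧ t x ≠ 0)
    (x u : R)
    (hux : u * x = x)
    (husx : u * star x = star x) :
    x * star x = u ↔ star x * x = u := by
  have ht_faithful : ∀ y : R, IsPositiveElem y → y ≠ 0 → t y ≠ 0 :=
    fun y hy hy0 => (hfaithful y hy hy0).2
  constructor
  · rintro rfl
    exact star_mul_self_eq_mul_star_self_of_faithful_trace t hadd htrace ht_faithful hux husx
  · rintro rfl
    have h := star_mul_self_eq_mul_star_self_of_faithful_trace t hadd htrace ht_faithful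
      (x := star x) (by rwa [star_star]) (by rwa [star_star])
    rwa [star_star] at h

/-- Let `t : R → T` be a faithful trace between `*`-rings, `x ∈ R`, and
`u ∈ R` an idempotent with `xu = x = ux` and `x*u = x* = ux*`. Then `x x* = u` if and
only if `x* x = u`. -/
theorem faithful_trace_partial_isometry
    {R T : Type*} [NonUnitalRing R] [StarRing R] [NonUnitalRing T] [StarRing T]
    (t : R → T)
    (hadd : ∀ x y : R, t (x + y) = t x + t y)
    (htrace : ∀ x y : R, t (x * y) = t (y * x))
    (hfaithful : ∀ x : R, IsPositiveElem x → x ≠ 0 → IsPositiveElem (t x) ∧ t x ≠ 0)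
    (x u : R) (hu : u * u = u)
    (hxu : x * u = x) (hux : u * x = x)
    (hsxu : star x * u = star x) (husx : u * star x = star x) :
    x * star x = u ↔ star x * x = u :=
  faithful_trace_partial_isometry_general t hadd htrace hfaithful x u hux husx
end
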